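/- Let G be a finite non-solvable group and x ∈ G such that the subgroup M generated by nil_G(x) is a maximal subgroup of G. Suppose the hypercenter Z*(G) of G is nontrivial and Z*(G) ≤ M. Then the cardinality of nil_G(x) is at least 12. -/

import Mathlib

/-- The nilpotentizer of `x` in `G`: the set of `y` such that `⟨x, y⟩` is nilpotent. -/
def nilpotentizer {G : Type*} [Group G] (x : G) : Set G :=
  {y | Group.IsNilpotent (Subgroup.closure ({x, y} : Set G))}

/-- The hypercenter of `G`: the terminal term of the upper central series of `G`
(for a finite group the series is eventually constant, so this supremum is
the stable value). -/
def hypercenter (G : Type*) [Group G] : Subgroup G :=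
  ⨆ n : ℕ, upperCentralSeries G n

/-!
Let `Z = Z_n(G)` be the hypercenter. For any subgroup `W`, the kernel of `W → G/Z` lies in
`Z_n(W)`, so `W` is nilpotent iff its image in `G/Z` is. Hence `nil(x)` is the full preimage of
`nil(xZ)` and `|nil(x)| = |Z| · |nil(xZ)|` with `|Z| ≥ 2`, so it suffices to rule out
`|nil(xZ)| ≤ 5`. In that case each `⟨xZ, yZ⟩` with `yZ ∈ nil(xZ)` lies in `nil(xZ)`, so has
order at most 5 and is abelian: `nil(xZ)` is the centralizer of `xZ`, a maximal subgroup of `G/Z` of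
order at most 5. It is an abelian `p`-group, so either it is normal with cyclic quotient, or it is
a self-normalising Sylow subgroup; then Burnside's transfer theorem gives a normal `p`-complement,
which is nilpotent since each of its Sylow subgroups is normalised by a conjugate of the maximal
subgroup. Either way `G/Z` is solvable, and so is `G` since `Z` is nilpotent.
-/

namespace Subgroup

variable {G : Type*} [Group G]

theorem subgroupOf_upperCentralSeries_le (K : Subgroup G) (n : ℕ) :
    (upperCentralSeries G n).subgroupOf K ≤ upperCentralSeries K n := by
  induction n with
  | zero => simp
  | succ n ih =>
    intro k hk
    rw [mem_subgroupOf, mem_upperCentralSeries_succ_iff] at hk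
    exact mem_upperCentralSeries_succ_iff.2 fun g => ih (hk g)

theorem isNilpotent_upperCentralSeries (n : ℕ) : Group.IsNilpotent (upperCentralSeries G n) :=
  ⟨⟨n, eq_top_iff.2 fun z _ => subgroupOf_upperCentralSeries_le _ n (mem_subgroupOf.2 z.2)⟩⟩

theorem isNilpotent_of_ker_le_upperCentralSeries {H : Type*} [Group H] [Group.IsNilpotent H]
    (f : G →* H) {m : ℕ} (hf : f.ker ≤ upperCentralSeries G m) : Group.IsNilpotent G := by
  have key : ∀ j, (upperCentralSeries H j).comap f ≤ upperCentralSeries G (m + j) := by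
    intro j
    induction j with
    | zero => simpa using hf
    | succ j ih =>
      intro a ha
      rw [mem_comap, mem_upperCentralSeries_succ_iff] at ha
      exact mem_upperCentralSeries_succ_iff.2 fun g => ih (by simpa using ha (f g))
  obtain ⟨c, hc⟩ := Group.IsNilpotent.nilpotent' (G := H)
  exact ⟨⟨m + c, eq_top_iff.2 fun a _ => key c (by simp [hc])⟩⟩

theorem isNilpotent_map_iff_of_ker_le_upperCentralSeries {H : Type*} [Group H] (f : G →* H)
    {n : ℕ} (hf : f.ker ≤ upperCentralSeries G n) (W : Subgroup G) :
    Group.IsNilpotent (W.map f) ↔ Group.IsNilpotent W := by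
  refine ⟨fun _ => isNilpotent_of_ker_le_upperCentralSeries (f.subgroupMap W) (m := n) ?_,
    fun _ => Group.nilpotent_of_surjective _ (f.subgroupMap_surjective W)⟩
  rw [ker_subgroupMap]
  exact (subgroupOf_mono _ hf).trans (subgroupOf_upperCentralSeries_le W n)

end Subgroup

theorem exists_hypercenter_eq_upperCentralSeries (G : Type*) [Group G] [Finite G] :
    ∃ n, hypercenter G = Subgroup.upperCentralSeries G n := by
  obtain ⟨n, hn⟩ := WellFoundedGT.monotone_chain_condition
    ⟨Subgroup.upperCentralSeries G, Subgroup.upperCentralSeries_mono G⟩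
  refine ⟨n, le_antisymm (iSup_le fun m => ?_) (le_iSup (Subgroup.upperCentralSeries G) n)⟩
  rcases le_total m n with h | h
  · exact Subgroup.upperCentralSeries_mono G h
  · exact (hn m h).ge

section SmallGroups

variable {G : Type*} [Group G] [Finite G]

theorem exists_card_eq_prime_pow_of_card_le_five (h : Nat.card G ≤ 5) :
    ∃ p n, p.Prime ∧ n ≤ 2 ∧ Nat.card G = p ^ n := by
  have hpos : 0 < Nat.card G := Nat.card_pos
  interval_cases hG : Nat.card G
  · exact ⟨2, 0, Nat.prime_two, by norm_num, rfl⟩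
  · exact ⟨2, 1, Nat.prime_two, by norm_num, rfl⟩
  · exact ⟨3, 1, Nat.prime_three, by norm_num, rfl⟩
  · exact ⟨2, 2, Nat.prime_two, le_rfl, rfl⟩
  · exact ⟨5, 1, Nat.prime_five, by norm_num, rfl⟩

theorem mul_comm_of_card_le_five (h : Nat.card G ≤ 5) (a b : G) : a * b = b * a := by
  obtain ⟨p, n, hp, hn, hcard⟩ := exists_card_eq_prime_pow_of_card_le_five h
  have := Fact.mk hp
  interval_cases n
  · have := (Nat.card_eq_one_iff_unique.mp hcard).1
    exact Subsingleton.elim _ _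
  · have := isCyclic_of_prime_card (hcard.trans (pow_one p))
    let := IsCyclic.commGroup (α := G)
    exact mul_comm a b
  · exact (IsPGroup.isMulCommutative_of_card_eq_prime_sq hcard).is_comm.comm a b

end SmallGroups

section Nilpotentizer

open Subgroup (closure centralizer)

variable {G : Type*} [Group G]

theorem nilpotentizer_eq_preimage {H : Type*} [Group H] (f : G →* H) {n : ℕ}
    (hf : f.ker ≤ Subgroup.upperCentralSeries G n) (x : G) :
    nilpotentizer x = f ⁻¹' nilpotentizer (f x) := by
  ext y
  change _ ↔ Group.IsNilpotent (closure {f x, f y})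
  rw [← Set.image_pair, ← MonoidHom.map_closure,
    Subgroup.isNilpotent_map_iff_of_ker_le_upperCentralSeries f hf]
  rfl

open scoped IsMulCommutative in
theorem centralizer_subset_nilpotentizer (x : G) :
    (centralizer {x} : Set G) ⊆ nilpotentizer x := by
  intro y hy
  have hxy : y * x = x * y := Subgroup.mem_centralizer_singleton_iff.1 hy
  have := Subgroup.isMulCommutative_closure (k := {x, y}) (by
    rintro a (rfl | rfl) b (rfl | rfl) <;> first | rfl | exact hxy | exact hxy.symm)
  exact CommGroup.isNilpotent

theorem closure_pair_subset_nilpotentizer {x y : G} (hy : y ∈ nilpotentizer x) :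
    (closure {x, y} : Set G) ⊆ nilpotentizer x := by
  intro w hw
  have hle : closure {x, w} ≤ closure {x, y} :=
    Subgroup.closure_le _ |>.2 <| Set.insert_subset (Subgroup.subset_closure (by simp))
      (by simpa using hw)
  have : Group.IsNilpotent (closure {x, y}) := hy
  exact Group.nilpotent_of_mulEquiv (Subgroup.subgroupOfEquivOfLe hle)

theorem nilpotentizer_eq_centralizer_of_card_le_five [Finite G] {x : G}
    (h : Nat.card (nilpotentizer x) ≤ 5) : nilpotentizer x = centralizer {x} := by
  refine subset_antisymm (fun y hy => ?_) (centralizer_subset_nilpotentizer x)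
  have hcard : Nat.card (closure {x, y}) ≤ 5 :=
    (Nat.card_mono (Set.toFinite _) (closure_pair_subset_nilpotentizer hy)).trans h
  have := mul_comm_of_card_le_five hcard ⟨y, Subgroup.subset_closure (by simp)⟩
    ⟨x, Subgroup.subset_closure (by simp)⟩
  exact Subgroup.mem_centralizer_singleton_iff.2 (congrArg Subtype.val this)

end Nilpotentizer

theorem Subgroup.isCoatom_of_isCoatom_comap {G H : Type*} [Group G] [Group H] {f : G →* H}
    (hf : Function.Surjective f) {C : Subgroup H} (h : IsCoatom (C.comap f)) : IsCoatom C :=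
  ((Subgroup.gc_map_comap f).toGaloisInsertion fun D =>
    (Subgroup.map_comap_eq_self_of_surjective hf D).ge).isCoatom_of_image h

theorem IsCoatom.isCyclic_quotient {G : Type*} [Group G] {M : Subgroup G} [M.Normal]
    (hM : IsCoatom M) : IsCyclic (G ⧸ M) := by
  obtain ⟨a, ha⟩ : ∃ a, a ∉ M := by
    by_contra! h
    exact hM.1 (eq_top_iff.2 fun a _ => h a)
  have htop : M ⊔ Subgroup.zpowers a = ⊤ :=
    hM.2 _ (left_lt_sup.2 fun h => ha (h (Subgroup.mem_zpowers a)))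
  refine isCyclic_iff_exists_zpowers_eq_top.2 ⟨QuotientGroup.mk a, ?_⟩
  rw [← QuotientGroup.mk'_apply, ← MonoidHom.map_zpowers, ← bot_sup_eq (Subgroup.map _ _),
    ← QuotientGroup.map_mk'_self M, ← Subgroup.map_sup, htop,
    Subgroup.map_top_of_surjective _ (QuotientGroup.mk'_surjective M)]

namespace Sylow

variable {H : Type*} [Group H] [Finite H] {p : ℕ} [Fact p.Prime]

theorem isCoatom_of_isCoatom {P : Sylow p H} (hP : IsCoatom (P : Subgroup H)) (S : Sylow p H) :
    IsCoatom (S : Subgroup H) := by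
  obtain ⟨g, rfl⟩ := MulAction.exists_smul_eq H P S
  rw [coe_subgroup_smul, Subgroup.pointwise_smul_def]
  exact ((MulAut.conj g).mapSubgroup.isCoatom_iff _).2 hP

theorem exists_le_of_card_dvd (P : Sylow p H) {N : Subgroup H}
    (h : Nat.card P ∣ Nat.card N) : ∃ S : Sylow p H, (S : Subgroup H) ≤ N := by
  obtain ⟨R⟩ : Nonempty (Sylow p N) := inferInstance
  obtain ⟨S, hRS⟩ := (R.isPGroup'.map N.subtype).exists_le_sylow
  have hcard : Nat.card S ≤ Nat.card ((R : Subgroup N).map N.subtype) := by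
    rw [Subgroup.card_map_of_injective N.subtype_injective, S.card_eq_multiplicity]
    refine Nat.le_of_dvd Nat.card_pos (R.pow_dvd_card_of_pow_dvd_card ?_)
    rwa [← P.card_eq_multiplicity]
  exact ⟨S, (Subgroup.eq_of_le_of_card_ge hRS hcard).ge.trans (Subgroup.map_subtype_le _)⟩

variable {P : Sylow p H} {K : Subgroup H} [K.Normal]

theorem normal_map_subtype_of_isCoatom_of_isComplement' (hP : IsCoatom (P : Subgroup H))
    (hK : K.IsComplement' P) {q : ℕ} [Fact q.Prime] (Q : Sylow q K) :
    ((Q : Subgroup K).map K.subtype).Normal := by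
  set Q' := (Q : Subgroup K).map K.subtype
  -- Frattini: `N(Q') K = H`, so `|N(Q')|` is divisible by `|H : K| = |P|`.
  have hdvd : Nat.card P ∣ Nat.card (Subgroup.normalizer (Q' : Set H)) := by
    rw [← hK.symm.index_eq_card, ← Subgroup.relIndex_top_right, ← normalizer_sup_eq_top Q,
      Subgroup.relIndex_sup_right]
    exact Subgroup.relIndex_dvd_card _ _
  obtain ⟨S, hS⟩ := P.exists_le_of_card_dvd hdvd
  rcases (isCoatom_of_isCoatom hP S).le_iff.1 hS with htop | hSN
  · exact Subgroup.normalizer_eq_top_iff.1 htop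
  · have hcop : Nat.Coprime (Nat.card S) (Nat.card K) := by
      rw [S.card_eq_multiplicity, ← P.card_eq_multiplicity, ← hK.index_eq_card]
      exact P.card_coprime_index
    have hQ' : Q' ≤ (S : Subgroup H) ⊓ K :=
      le_inf (hSN ▸ Subgroup.le_normalizer) (Subgroup.map_subtype_le _)
    rw [(Subgroup.disjoint_of_coprime_natCard hcop).eq_bot, le_bot_iff] at hQ'
    rw [hQ']
    infer_instance

theorem isNilpotent_of_isCoatom_of_isComplement' (hP : IsCoatom (P : Subgroup H))
    (hK : K.IsComplement' P) : Group.IsNilpotent K := by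
  refine (Group.isNilpotent_of_finite_tfae.out 0 3).2 ?_
  intro q _ Q
  have := (normal_map_subtype_of_isCoatom_of_isComplement' hP hK Q).subgroupOf K
  rwa [Subgroup.subgroupOf, Subgroup.comap_map_eq_self_of_injective K.subtype_injective] at this

end Sylow

section Solvable

theorem IsCoatom.isSolvable_of_normal {H : Type*} [Group H] {M : Subgroup H} [M.Normal]
    [Group.IsSolvable M] (hM : IsCoatom M) : Group.IsSolvable H := by
  have := hM.isCyclic_quotient
  let := IsCyclic.commGroup (α := H ⧸ M)
  exact (Group.isSolvable_iff_subgroup_quotient M).2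
    ⟨inferInstance, Group.isSolvable_of_comm mul_comm⟩

variable {H : Type*} [Group H] [Finite H] {p : ℕ} [Fact p.Prime]

theorem Sylow.isSolvable_of_isCoatom {P : Sylow p H} (hP : IsCoatom (P : Subgroup H))
    (hnorm : ¬ (P : Subgroup H).Normal) (hcomm : ∀ a b : P, a * b = b * a) :
    Group.IsSolvable H := by
  have hN : Subgroup.normalizer (P : Set H) = P :=
    (hP.le_iff.1 Subgroup.le_normalizer).resolve_left
      fun h => hnorm (Subgroup.normalizer_eq_top_iff.1 h)
  have hNC : Subgroup.normalizer (P : Set H) ≤ Subgroup.centralizer (P : Set H) := by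
    rw [hN]
    intro a ha
    exact Subgroup.mem_centralizer_iff.2 fun b hb =>
      congrArg Subtype.val (hcomm ⟨b, hb⟩ ⟨a, ha⟩)
  -- Burnside: `K` is a normal complement of `P`, and `H / K` embeds in the abelian group `P`.
  set K := (MonoidHom.transferSylow P hNC).ker
  have := Sylow.isNilpotent_of_isCoatom_of_isComplement' hP
    (MonoidHom.ker_transferSylow_isComplement' P hNC)
  have := Group.isSolvable_of_comm hcomm
  exact Group.isSolvable_of_ker_le_range K.subtype (MonoidHom.transferSylow P hNC)
    (Subgroup.range_subtype K).ge

theorem isSolvable_of_isCoatom_of_isPGroup {M : Subgroup H} (hM : IsCoatom M)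
    (hpM : IsPGroup p M) (hcomm : ∀ a b : M, a * b = b * a) : Group.IsSolvable H := by
  have := Group.isSolvable_of_comm hcomm
  by_cases hnorm : M.Normal
  · exact hM.isSolvable_of_normal
  obtain ⟨P, hMP⟩ := hpM.exists_le_sylow
  rcases hM.le_iff.1 hMP with htop | hPM
  · have hsurj : Function.Surjective (P : Subgroup H).subtype := by
      rw [← MonoidHom.range_eq_top, Subgroup.range_subtype, htop]
    have := (P.isPGroup'.of_surjective _ hsurj).isNilpotent
    infer_instance
  · subst hPM
    exact Sylow.isSolvable_of_isCoatom hM hnorm hcomm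

theorem isSolvable_of_isCoatom_of_card_le_five {M : Subgroup H} (hM : IsCoatom M)
    (h5 : Nat.card M ≤ 5) : Group.IsSolvable H := by
  obtain ⟨q, n, hq, -, hcard⟩ := exists_card_eq_prime_pow_of_card_le_five h5
  have := Fact.mk hq
  exact isSolvable_of_isCoatom_of_isPGroup hM (IsPGroup.of_card hcard)
    (mul_comm_of_card_le_five h5)

end Solvable

theorem stmt_18_general {G : Type*} [Group G] [Finite G] (hG : ¬ IsSolvable G) (x : G)
    (hmax : IsCoatom (Subgroup.closure (nilpotentizer x)))
    (hZ : hypercenter G ≠ ⊥) :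
    12 ≤ Nat.card (nilpotentizer x) := by
  obtain ⟨n, hn⟩ := exists_hypercenter_eq_upperCentralSeries G
  set Z := hypercenter G
  have : Z.Normal := hn ▸ inferInstance
  set π := QuotientGroup.mk' Z
  have hker : π.ker ≤ Subgroup.upperCentralSeries G n := by rw [QuotientGroup.ker_mk', hn]
  have hnil := nilpotentizer_eq_preimage π hker x
  have hcard : Nat.card (nilpotentizer x) = Nat.card Z * Nat.card (nilpotentizer (π x)) := by
    rw [hnil]
    exact QuotientGroup.card_preimage_mk Z _
  have hZ2 : 1 < Nat.card Z := Z.one_lt_card_iff_ne_bot.2 hZ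
  by_contra! hlt
  have h5 : Nat.card (nilpotentizer (π x)) ≤ 5 := by nlinarith
  have hcen := nilpotentizer_eq_centralizer_of_card_le_five h5
  rw [hcen] at h5
  rw [hnil, hcen, ← Subgroup.coe_comap, Subgroup.closure_eq] at hmax
  have hquot := isSolvable_of_isCoatom_of_card_le_five
    (Subgroup.isCoatom_of_isCoatom_comap (QuotientGroup.mk'_surjective Z) hmax) h5
  have : Group.IsNilpotent Z := by
    rw [hn]
    exact Subgroup.isNilpotent_upperCentralSeries n
  exact hG ((Group.isSolvable_iff_subgroup_quotient Z).2 ⟨inferInstance, hquot⟩)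

theorem stmt_18 {G : Type*} [Group G] [Finite G] (hG : ¬ IsSolvable G) (x : G)
    (hmax : IsCoatom (Subgroup.closure (nilpotentizer x)))
    (hZ : hypercenter G ≠ ⊥)
    (hZM : hypercenter G ≤ Subgroup.closure (nilpotentizer x)) :
    12 ≤ Nat.card (nilpotentizer x) :=
  stmt_18_general hG x hmax hZ
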